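/- Let K ≥ 2, Y = {1,...,K}, q : Y → ℝ nonnegative with p̄(S) = π_{|S|}·(1/C(K−1,|S|))·Σ_{y∉S} q(y), priors π_c as above with Σ_c c·π_c > 0, λ = (K−1)/(Σ_c c·π_c), γ ∈ [0,1], ℓ : Y → ℝ arbitrary, and L = Σ_{y∈Y} ℓ(y). Then Σ_{y∈Y} ℓ(y)·q(y) = Σ_{S:1≤|S|≤K−1} [ (1−γ)·L − λ·Σ_{y∈S} ℓ(y) ]·p̄(S) + γ·L·(Σ_{y∈Y} q(y)). -/

import Mathlib

/-!
Group the sets `S` by their size `c`. Double counting gives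
`∑_{|S| = c} ∑_{z ∉ S} q z = C(K-1, c) · Q` and, since an ordered pair `y ≠ z` is separated
(`y ∈ S`, `z ∉ S`) by exactly `C(K-2, c-1)` such sets,
`∑_{|S| = c} (∑_{y ∈ S} ℓ y) (∑_{z ∉ S} q z) = C(K-2, c-1) · (L Q - ∑ ℓ q)`.
With `(K-1) C(K-2, c-1) = c C(K-1, c)` the total mass of `p̄` is `(∑ π_c) Q = Q` and
`λ ∑_S (∑_{y ∈ S} ℓ y) p̄(S) = L Q - ∑ ℓ q`, so the `γ`-terms cancel and `∑ ℓ q` remains.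
-/

open Finset

namespace Finset

variable {α : Type*}

theorem sum_powerset_filter_one_le_card_le {M : Type*} [AddCommMonoid M] (s : Finset α) (m : ℕ)
    (f : Finset α → M) :
    ∑ S ∈ s.powerset with 1 ≤ #S ∧ #S ≤ m, f S = ∑ c ∈ Icc 1 m, ∑ S ∈ powersetCard c s, f S := by
  rw [← sum_fiberwise_of_maps_to (g := card) (t := Icc 1 m) fun S hS => by
    simpa only [mem_Icc] using (mem_filter.1 hS).2]
  refine sum_congr rfl fun c hc => sum_congr ?_ fun _ _ => rfl
  ext S
  simp only [mem_filter, mem_powerset, mem_powersetCard]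
  grind

theorem filter_powersetCard_notMem [DecidableEq α] (s : Finset α) (z : α) (c : ℕ) :
    {S ∈ s.powersetCard c | z ∉ S} = (s.erase z).powersetCard c := by
  ext S
  simp only [mem_filter, mem_powersetCard, subset_erase]
  tauto

theorem sum_sum_compl_eq_sum_card_smul [Fintype α] [DecidableEq α] {M : Type*} [AddCommMonoid M]
    (P : Finset (Finset α)) (q : α → M) :
    ∑ S ∈ P, ∑ z ∈ Sᶜ, q z = ∑ z, #{S ∈ P | z ∉ S} • q z := by
  rw [sum_comm' (t' := univ) (s' := fun z => {S ∈ P | z ∉ S}) (by simp)]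
  simp only [sum_const]

variable [Fintype α] [DecidableEq α]

theorem card_filter_powersetCard_univ_notMem (z : α) (c : ℕ) :
    #{S ∈ powersetCard c univ | z ∉ S} = (Fintype.card α - 1).choose c := by
  rw [filter_powersetCard_notMem, card_powersetCard, card_erase_of_mem (mem_univ z), card_univ]

theorem card_filter_powersetCard_univ_mem_notMem {y z : α} (hyz : y ≠ z) {c : ℕ} (hc : 1 ≤ c) :
    #{S ∈ {S ∈ powersetCard c univ | y ∈ S} | z ∉ S} = (Fintype.card α - 2).choose (c - 1) := by
  rw [filter_comm, filter_powersetCard_notMem]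
  simp_rw [← singleton_subset_iff]
  rw [card_filter_powersetCard_subset _ _ _ (by simpa using hyz) (by simpa using hc)]
  simp [card_erase_of_mem, Nat.sub_sub]

variable {R : Type*} [CommRing R]

theorem sum_powersetCard_sum_compl (c : ℕ) (q : α → R) :
    ∑ S ∈ powersetCard c univ, ∑ z ∈ Sᶜ, q z = (Fintype.card α - 1).choose c * ∑ z, q z := by
  simp only [sum_sum_compl_eq_sum_card_smul, card_filter_powersetCard_univ_notMem, nsmul_eq_mul,
    mul_sum]

theorem sum_filter_mem_sum_compl (y : α) {c : ℕ} (hc : 1 ≤ c) (q : α → R) :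
    ∑ S ∈ {S ∈ powersetCard c univ | y ∈ S}, ∑ z ∈ Sᶜ, q z
      = (Fintype.card α - 2).choose (c - 1) * (∑ z, q z - q y) := by
  have hy : {S ∈ {S ∈ powersetCard c (univ : Finset α) | y ∈ S} | y ∉ S} = ∅ :=
    filter_eq_empty_iff.2 fun S hS => not_not.2 (mem_filter.1 hS).2
  rw [sum_sum_compl_eq_sum_card_smul, ← add_sum_erase _ _ (mem_univ y), hy, card_empty, zero_smul,
    zero_add, ← sum_erase_eq_sub (mem_univ y), mul_sum]
  refine sum_congr rfl fun z hz => ?_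
  rw [card_filter_powersetCard_univ_mem_notMem (ne_of_mem_erase hz).symm hc, nsmul_eq_mul]

theorem sum_powersetCard_sum_mul_sum_compl {c : ℕ} (hc : 1 ≤ c) (ℓ q : α → R) :
    ∑ S ∈ powersetCard c univ, (∑ y ∈ S, ℓ y) * ∑ z ∈ Sᶜ, q z
      = (Fintype.card α - 2).choose (c - 1) * ((∑ y, ℓ y) * (∑ z, q z) - ∑ y, ℓ y * q y) := by
  calc ∑ S ∈ powersetCard c univ, (∑ y ∈ S, ℓ y) * ∑ z ∈ Sᶜ, q z
      = ∑ y, ∑ S ∈ {S ∈ powersetCard c univ | y ∈ S}, ℓ y * ∑ z ∈ Sᶜ, q z := by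
        simp only [sum_mul]
        exact sum_comm' (by simp)
    _ = ∑ y, ℓ y * ((Fintype.card α - 2).choose (c - 1) * (∑ z, q z - q y)) := by
        simp only [← mul_sum, sum_filter_mem_sum_compl _ hc]
    _ = (Fintype.card α - 2).choose (c - 1) * ∑ y, (ℓ y * ∑ z, q z - ℓ y * q y) := by
        rw [mul_sum]
        exact sum_congr rfl fun _ _ => by ring
    _ = _ := by rw [sum_sub_distrib, ← sum_mul]

end Finset

section ComplementaryMass

open Fintype

variable {α : Type*} [Fintype α] [DecidableEq α]

/-- The paper's `p̄(S)`. -/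
noncomputable def complementarySetMass (π : ℕ → ℝ) (q : α → ℝ) (S : Finset α) : ℝ :=
  π #S * (((card α - 1).choose #S : ℕ) : ℝ)⁻¹ * ∑ z ∈ Sᶜ, q z

variable (π : ℕ → ℝ) (ℓ q : α → ℝ)

theorem sum_powersetCard_complementarySetMass {c : ℕ} (hc : c ≤ card α - 1) :
    ∑ S ∈ powersetCard c univ, complementarySetMass π q S = π c * ∑ z, q z := by
  have hchoose : (((card α - 1).choose c : ℕ) : ℝ) ≠ 0 := by exact_mod_cast (Nat.choose_pos hc).ne'
  calc ∑ S ∈ powersetCard c univ, complementarySetMass π q S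
      = π c * (((card α - 1).choose c : ℕ) : ℝ)⁻¹ * ∑ S ∈ powersetCard c univ, ∑ z ∈ Sᶜ, q z := by
        rw [mul_sum]
        refine sum_congr rfl fun S hS => ?_
        rw [complementarySetMass, (mem_powersetCard.1 hS).2]
    _ = π c * ∑ z, q z := by
        rw [sum_powersetCard_sum_compl]
        field_simp

theorem sum_powersetCard_sum_mul_complementarySetMass {c : ℕ} (hc : c ∈ Icc 1 (card α - 1)) :
    ((card α : ℝ) - 1) * ∑ S ∈ powersetCard c univ, (∑ y ∈ S, ℓ y) * complementarySetMass π q S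
      = c * π c * ((∑ y, ℓ y) * (∑ z, q z) - ∑ y, ℓ y * q y) := by
  obtain ⟨hc1, hc⟩ := mem_Icc.1 hc
  have hchoose : (((card α - 1).choose c : ℕ) : ℝ) ≠ 0 := by exact_mod_cast (Nat.choose_pos hc).ne'
  have hpascal : ((card α : ℝ) - 1) * ((card α - 2).choose (c - 1) : ℕ)
      = c * ((card α - 1).choose c : ℕ) := by
    obtain ⟨m, hm⟩ : ∃ m, card α = m + 2 := ⟨card α - 2, by omega⟩
    obtain ⟨k, rfl⟩ : ∃ k, c = k + 1 := ⟨c - 1, by omega⟩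
    have h := congrArg (Nat.cast (R := ℝ)) (Nat.add_one_mul_choose_eq m k)
    rw [hm, show m + 2 - 1 = m + 1 by omega, Nat.add_sub_cancel, Nat.add_sub_cancel]
    push_cast at h ⊢
    linear_combination h
  calc ((card α : ℝ) - 1) * ∑ S ∈ powersetCard c univ, (∑ y ∈ S, ℓ y) * complementarySetMass π q S
      = ((card α : ℝ) - 1) * (π c * (((card α - 1).choose c : ℕ) : ℝ)⁻¹ *
          ∑ S ∈ powersetCard c univ, (∑ y ∈ S, ℓ y) * ∑ z ∈ Sᶜ, q z) := by
        congr 1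
        rw [mul_sum]
        refine sum_congr rfl fun S hS => ?_
        rw [complementarySetMass, (mem_powersetCard.1 hS).2]
        ring
    _ = _ := by
        rw [sum_powersetCard_sum_mul_sum_compl hc1]
        field_simp
        linear_combination ((∑ y, ℓ y) * (∑ z, q z) - ∑ y, ℓ y * q y) * π c * hpascal

theorem sum_complementarySetMass :
    ∑ S ∈ univ.powerset with 1 ≤ #S ∧ #S ≤ card α - 1, complementarySetMass π q S
      = (∑ c ∈ Icc 1 (card α - 1), π c) * ∑ z, q z := by
  rw [sum_powerset_filter_one_le_card_le, sum_mul]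
  exact sum_congr rfl fun c hc => sum_powersetCard_complementarySetMass π q (mem_Icc.1 hc).2

theorem sum_sum_mul_complementarySetMass :
    ((card α : ℝ) - 1) * ∑ S ∈ univ.powerset with 1 ≤ #S ∧ #S ≤ card α - 1,
        (∑ y ∈ S, ℓ y) * complementarySetMass π q S
      = (∑ c ∈ Icc 1 (card α - 1), (c : ℝ) * π c) *
          ((∑ y, ℓ y) * (∑ z, q z) - ∑ y, ℓ y * q y) := by
  rw [sum_powerset_filter_one_le_card_le, mul_sum, sum_mul]
  exact sum_congr rfl fun c hc => sum_powersetCard_sum_mul_complementarySetMass π ℓ q hc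

end ComplementaryMass

theorem stmt_11_general (K : ℕ) (q : Fin K → ℝ)
    (π : ℕ → ℝ)
    (hπsum : ∑ c ∈ Finset.Icc 1 (K - 1), π c = 1)
    (hπpos : 0 < ∑ c ∈ Finset.Icc 1 (K - 1), (c : ℝ) * π c)
    (ℓ : Fin K → ℝ) (γ : ℝ) :
    (∑ y, ℓ y * q y)
      = (∑ S ∈ Finset.univ.powerset.filter
          (fun S : Finset (Fin K) => 1 ≤ S.card ∧ S.card ≤ K - 1),
          ((1 - γ) * (∑ y, ℓ y)
            - (((K : ℝ) - 1) / (∑ c ∈ Finset.Icc 1 (K - 1), (c : ℝ) * π c)) *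
                ∑ y ∈ S, ℓ y) *
            (π S.card * (((K - 1).choose S.card : ℝ))⁻¹ * ∑ z ∈ Sᶜ, q z))
        + γ * (∑ y, ℓ y) * (∑ y, q y) := by
  have hmass := sum_complementarySetMass π q
  have hloss := sum_sum_mul_complementarySetMass π ℓ q
  simp only [Fintype.card_fin, hπsum, one_mul] at hmass hloss
  have hw : ∀ S : Finset (Fin K), π S.card * (((K - 1).choose S.card : ℝ))⁻¹ * ∑ z ∈ Sᶜ, q z
      = complementarySetMass π q S := by
    simp only [complementarySetMass, Fintype.card_fin, implies_true]
  simp only [hw, sub_mul, sum_sub_distrib, ← mul_sum, mul_assoc, hmass]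
  rw [div_mul_eq_mul_div, hloss, mul_div_cancel_left₀ _ hπpos.ne']
  ring

theorem stmt_11 (K : ℕ) (hK : 2 ≤ K) (q : Fin K → ℝ) (hq : ∀ y, 0 ≤ q y)
    (π : ℕ → ℝ) (hπ : ∀ c ∈ Finset.Icc 1 (K - 1), 0 ≤ π c)
    (hπsum : ∑ c ∈ Finset.Icc 1 (K - 1), π c = 1)
    (hπpos : 0 < ∑ c ∈ Finset.Icc 1 (K - 1), (c : ℝ) * π c)
    (ℓ : Fin K → ℝ) (γ : ℝ) (hγ0 : 0 ≤ γ) (hγ1 : γ ≤ 1) :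
    (∑ y, ℓ y * q y)
      = (∑ S ∈ Finset.univ.powerset.filter
          (fun S : Finset (Fin K) => 1 ≤ S.card ∧ S.card ≤ K - 1),
          ((1 - γ) * (∑ y, ℓ y)
            - (((K : ℝ) - 1) / (∑ c ∈ Finset.Icc 1 (K - 1), (c : ℝ) * π c)) *
                ∑ y ∈ S, ℓ y) *
            (π S.card * (((K - 1).choose S.card : ℝ))⁻¹ * ∑ z ∈ Sᶜ, q z))
        + γ * (∑ y, ℓ y) * (∑ y, q y) :=
  stmt_11_general K q π hπsum hπpos ℓ γ
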